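/- Let X = (X¹, X²) ∈ R² where X¹ ~ N(μ, 1) with μ ≠ 0 and X² ~ Exp(1) are independent. Then for any β, β̃ ∈ R², if β¹X¹ + β²X² has the same distribution as β̃¹X¹ + β̃²X², it follows that β = β̃. In particular, in the unlinked linear regression model with this covariate distribution, B_0 = {β_0}. -/

import Mathlib

open MeasureTheory ProbabilityTheory Filter Matrix
open scoped ENNReal NNReal Topology

noncomputable section

/-- The Euclidean norm of a vector in `Fin d → ℝ`. -/
def vnorm {d : ℕ} (v : Fin d → ℝ) : ℝ := Real.sqrt (∑ i, v i ^ 2)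

/-- The norm `‖x‖_{2,Γ} = √(xᵀ Γ x)` associated with a matrix `Γ`. -/
def mnorm {d : ℕ} (Γ : Matrix (Fin d) (Fin d) ℝ) (x : Fin d → ℝ) : ℝ :=
  Real.sqrt (x ⬝ᵥ Γ *ᵥ x)

/-- The cumulative distribution function of a measure on `ℝ`. -/
def cdfOf (μ : Measure ℝ) (y : ℝ) : ℝ := (μ (Set.Iic y)).toReal

/-- The empirical CDF of the sample `Y 0 ω, …, Y (n-1) ω`. -/
def empCDF {Ω : Type*} (n : ℕ) (Y : ℕ → Ω → ℝ) (ω : Ω) (y : ℝ) : ℝ :=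
  (n : ℝ)⁻¹ * ∑ i ∈ Finset.range n, if Y i ω ≤ y then (1 : ℝ) else 0

/-- The empirical deconvolution criterion `D_{n,p}(β)`. -/
def Dnp {Ω : Type*} {d : ℕ} (Feps : ℝ → ℝ) (p n : ℕ) (Y : ℕ → Ω → ℝ)
    (X : ℕ → Ω → Fin d → ℝ) (ω : Ω) (β : Fin d → ℝ) : ℝ :=
  (n : ℝ)⁻¹ * ∑ j ∈ Finset.range n,
    |empCDF n Y ω (Y j ω) - (n : ℝ)⁻¹ * ∑ i ∈ Finset.range n, Feps (Y j ω - β ⬝ᵥ X i ω)| ^ p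

/-- The population criterion `D_{2,F^Y}(β)`. -/
def Dpop {d : ℕ} (Feps : ℝ → ℝ) (μX : Measure (Fin d → ℝ)) (μY : Measure ℝ)
    (β : Fin d → ℝ) : ℝ :=
  ∫ y, (cdfOf μY y - ∫ x, Feps (y - β ⬝ᵥ x) ∂μX) ^ 2 ∂μY

/-- `Z 0, Z 1, …` is an i.i.d. sample from the distribution `μ`. -/
def IsIIDSample {Ω : Type*} [MeasureSpace Ω] {E : Type*} [MeasurableSpace E]
    (Z : ℕ → Ω → E) (μ : Measure E) : Prop :=
  (∀ i, Measurable (Z i)) ∧ (∀ i, Measure.map (Z i) ℙ = μ) ∧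
    iIndepFun (m := fun _ => ‹MeasurableSpace E›) Z ℙ

/-- The unlinked linear regression model: `Y =d β₀ᵀ X + ε`. -/
def UnlinkedModel {d : ℕ} (μX : Measure (Fin d → ℝ)) (μeps : Measure ℝ)
    (β₀ : Fin d → ℝ) (μY : Measure ℝ) : Prop :=
  μY = Measure.map (fun q : (Fin d → ℝ) × ℝ => β₀ ⬝ᵥ q.1 + q.2) (μX.prod μeps)

/-- The set `B₀` of vectors `β` such that `βᵀX` has the same distribution as `β₀ᵀX`. -/
def B0set {d : ℕ} (μX : Measure (Fin d → ℝ)) (β₀ : Fin d → ℝ) : Set (Fin d → ℝ) :=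
  {β | Measure.map (fun x => β ⬝ᵥ x) μX = Measure.map (fun x => β₀ ⬝ᵥ x) μX}

open Real Set
open scoped Nat

/-!
Write `Y = aX¹ + bX²`. Its mean is `aμ + b`. Centring splits `Y - 𝔼Y` into the independent centred
parts `a(X¹ - μ)` and `b(X² - 1)`, so the third central moment of `Y` is the sum of theirs; the
Gaussian one vanishes by symmetry and the exponential one is `2b³`. Equal laws thus have equal `b³`,
hence equal `b`, and then equal `aμ`, which determines `a` because `μ ≠ 0`.
-/

section Moments

open Finset

variable {α β : Type*} [MeasurableSpace α] [MeasurableSpace β] {μ : Measure α} {ν : Measure β}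

lemma MeasureTheory.MemLp.integrable_pow_of_le [IsFiniteMeasure μ] {f : α → ℝ} {n k : ℕ}
    (hf : MemLp f n μ) (hk : k ≤ n) : Integrable (fun x => f x ^ k) μ :=
  ((hf.mono_exponent (by exact_mod_cast hk)).integrable_norm_pow').mono'
    (hf.aestronglyMeasurable.pow k) (ae_of_all _ fun x => by simp [norm_pow])

lemma integral_add_const_pow [IsFiniteMeasure μ] {f : α → ℝ} {n : ℕ} (hf : MemLp f n μ)
    (c : ℝ) :
    ∫ x, (f x + c) ^ n ∂μ = ∑ k ∈ range (n + 1), (∫ x, f x ^ k ∂μ) * c ^ (n - k) * n.choose k := by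
  simp_rw [add_pow]
  rw [integral_finsetSum _ fun k hk =>
    ((hf.integrable_pow_of_le (mem_range_succ_iff.mp hk)).mul_const _).mul_const _]
  simp_rw [integral_mul_const]

lemma integral_add_pow_prod [IsFiniteMeasure μ] [IsFiniteMeasure ν] {f : α → ℝ} {g : β → ℝ}
    {n : ℕ} (hf : MemLp f n μ) (hg : MemLp g n ν) :
    ∫ p, (f p.1 + g p.2) ^ n ∂μ.prod ν =
      ∑ k ∈ range (n + 1), (∫ x, f x ^ k ∂μ) * (∫ y, g y ^ (n - k) ∂ν) * n.choose k := by
  simp_rw [add_pow]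
  rw [integral_finsetSum _ fun k hk =>
    (((hf.integrable_pow_of_le (mem_range_succ_iff.mp hk)).mul_prod
      (hg.integrable_pow_of_le (Nat.sub_le n k))).mul_const _)]
  simp_rw [integral_mul_const]
  exact sum_congr rfl fun k _ => by
    rw [integral_prod_mul (fun x => f x ^ k) (fun y => g y ^ (n - k))]

end Moments

section Exponential

variable {r : ℝ}

lemma expMeasure_eq_withDensity_restrict_Ioi (r : ℝ) :
    expMeasure r =
      (volume.restrict (Ioi 0)).withDensity fun x => ENNReal.ofReal (r * exp (-(r * x))) := by
  have hdens :
      exponentialPDF r = (Ici 0).indicator fun x => ENNReal.ofReal (r * exp (-(r * x))) := by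
    ext x
    by_cases hx : 0 ≤ x <;> simp [exponentialPDF_eq, hx]
  rw [expMeasure, gammaMeasure, show gammaPDF 1 r = exponentialPDF r from rfl, hdens,
    withDensity_indicator measurableSet_Ici, Measure.restrict_congr_set Ioi_ae_eq_Ici]

lemma integral_expMeasure (hr : 0 < r) (f : ℝ → ℝ) :
    ∫ x, f x ∂expMeasure r = ∫ x in Ioi 0, r * exp (-(r * x)) * f x := by
  rw [expMeasure_eq_withDensity_restrict_Ioi, integral_withDensity_eq_integral_toReal_smul
    (by fun_prop) (ae_of_all _ fun _ => ENNReal.ofReal_lt_top)]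
  simp_rw [ENNReal.toReal_ofReal (by positivity : 0 ≤ r * exp _), smul_eq_mul]

lemma integrable_expMeasure_iff (hr : 0 < r) {f : ℝ → ℝ} :
    Integrable f (expMeasure r) ↔ IntegrableOn (fun x => exp (-(r * x)) * f x) (Ioi 0) := by
  rw [expMeasure_eq_withDensity_restrict_Ioi, integrable_withDensity_iff_integrable_smul'
    (by fun_prop) (ae_of_all _ fun _ => ENNReal.ofReal_lt_top)]
  simp_rw [ENNReal.toReal_ofReal (by positivity : 0 ≤ r * exp _), smul_eq_mul, mul_assoc]
  exact integrable_const_mul_iff (isUnit_iff_ne_zero.mpr hr.ne') _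

lemma Iio_subset_integrableExpSet_id_expMeasure (hr : 0 < r) :
    Iio r ⊆ integrableExpSet id (expMeasure r) := by
  intro t ht
  rw [integrableExpSet, mem_ofPred_eq, integrable_expMeasure_iff hr]
  refine (exp_neg_integrableOn_Ioi 0 (sub_pos.mpr ht)).congr_fun (fun x _ => ?_) measurableSet_Ioi
  rw [id, ← exp_add]
  ring_nf

lemma memLp_id_expMeasure (hr : 0 < r) (p : ℝ≥0) : MemLp id p (expMeasure r) :=
  memLp_of_mem_interior_integrableExpSet
    (interior_mono (Iio_subset_integrableExpSet_id_expMeasure hr) (by simpa using hr)) p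

lemma integral_pow_expMeasure (hr : 0 < r) (k : ℕ) : ∫ x, x ^ k ∂expMeasure r = k ! / r ^ k := by
  have hΓ := integral_rpow_mul_exp_neg_mul_Ioi (a := k + 1) (by positivity) hr
  rw [add_sub_cancel_right, Gamma_nat_eq_factorial, ← Nat.cast_succ, rpow_natCast] at hΓ
  have hintegrand (x : ℝ) : r * exp (-(r * x)) * x ^ k = r * (x ^ (k : ℝ) * exp (-(r * x))) := by
    rw [rpow_natCast]
    ring
  simp_rw [integral_expMeasure hr, hintegrand, integral_const_mul, hΓ]
  rw [one_div, inv_pow, pow_succ]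
  field_simp

lemma integral_id_expMeasure (hr : 0 < r) : ∫ x, x ∂expMeasure r = r⁻¹ := by
  simpa using integral_pow_expMeasure hr 1

lemma integral_sub_inv_expMeasure (hr : 0 < r) : ∫ x, (x - r⁻¹) ∂expMeasure r = 0 := by
  have := isProbabilityMeasure_expMeasure hr
  rw [integral_sub (f := fun x => x) ((memLp_id_expMeasure hr 1).integrable le_rfl)
    (integrable_const _), integral_id_expMeasure hr, integral_const, probReal_univ, one_smul,
    sub_self]

lemma integral_sub_inv_pow_three_expMeasure (hr : 0 < r) :
    ∫ x, (x - r⁻¹) ^ 3 ∂expMeasure r = 2 / r ^ 3 := by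
  have := isProbabilityMeasure_expMeasure hr
  have h := integral_add_const_pow (f := id) (n := 3)
    (by simpa using memLp_id_expMeasure hr 3) (-r⁻¹)
  simp only [id, ← sub_eq_add_neg] at h
  rw [h]
  simp only [Finset.sum_range_succ, Finset.sum_range_zero, integral_pow_expMeasure hr]
  norm_num [Nat.factorial, Nat.choose]
  field_simp
  ring

end Exponential

lemma integral_sub_pow_gaussianReal_of_odd (μ : ℝ) (v : ℝ≥0) {k : ℕ} (hk : Odd k) :
    ∫ x, (x - μ) ^ k ∂gaussianReal μ v = 0 := by
  have hcentered : ∫ x, (x - μ) ^ k ∂gaussianReal μ v = ∫ x, x ^ k ∂gaussianReal 0 v := by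
    rw [← sub_self μ, ← gaussianReal_map_sub_const, integral_map (by fun_prop) (by fun_prop)]
  have hsymm : ∫ x, x ^ k ∂gaussianReal 0 v = ∫ x, (-x) ^ k ∂gaussianReal 0 v := by
    conv_lhs => rw [← neg_zero, ← gaussianReal_map_neg]
    rw [integral_map (by fun_prop) (by fun_prop)]
  simp_rw [hk.neg_pow, integral_neg] at hsymm
  linarith

section Design

variable {μ : ℝ} {v : ℝ≥0} {r : ℝ}

lemma integral_linear_gaussianReal_prod_expMeasure (hr : 0 < r) (a b : ℝ) :
    ∫ p, a * p.1 + b * p.2 ∂(gaussianReal μ v).prod (expMeasure r) = a * μ + b / r := by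
  have := isProbabilityMeasure_expMeasure hr
  have h := integral_add_pow_prod (n := 1) (f := fun x => a * x) (g := fun y => b * y)
    (by simpa using (memLp_id_gaussianReal (μ := μ) (v := v) 1).const_mul a)
    (by simpa using (memLp_id_expMeasure hr 1).const_mul b)
  simpa [Finset.sum_range_succ, integral_const_mul a (fun x => x),
    integral_const_mul b (fun x => x), integral_id_gaussianReal, integral_id_expMeasure hr,
    div_eq_mul_inv, add_comm] using h

lemma integral_linear_sub_mean_pow_three_gaussianReal_prod_expMeasure (hr : 0 < r) (a b : ℝ) :
    ∫ p, (a * p.1 + b * p.2 - (a * μ + b / r)) ^ 3 ∂(gaussianReal μ v).prod (expMeasure r) =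
      2 * b ^ 3 / r ^ 3 := by
  have := isProbabilityMeasure_expMeasure hr
  have hcentre (p : ℝ × ℝ) :
      a * p.1 + b * p.2 - (a * μ + b / r) = a * (p.1 - μ) + b * (p.2 - r⁻¹) := by
    ring
  have hgauss := integral_sub_pow_gaussianReal_of_odd μ v odd_one
  simp only [pow_one] at hgauss
  simp_rw [hcentre]
  rw [integral_add_pow_prod (f := fun x => a * (x - μ)) (g := fun y => b * (y - r⁻¹))
    (by simpa using ((memLp_id_gaussianReal (μ := μ) (v := v) 3).sub (memLp_const μ)).const_mul a)
    (by simpa using ((memLp_id_expMeasure hr 3).sub (memLp_const r⁻¹)).const_mul b)]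
  simp only [Finset.sum_range_succ, Finset.sum_range_zero, Nat.reduceSub, mul_pow, pow_zero,
    pow_one, integral_const_mul, integral_const, probReal_univ, one_smul, hgauss,
    integral_sub_pow_gaussianReal_of_odd μ v (by decide : Odd 3), integral_sub_inv_expMeasure hr,
    integral_sub_inv_pow_three_expMeasure hr]
  norm_num
  ring

theorem eq_of_map_linear_gaussianReal_prod_expMeasure_eq (hμ : μ ≠ 0) (hr : 0 < r)
    {β β' : ℝ × ℝ}
    (h : (((gaussianReal μ v).prod (expMeasure r)).map fun p => β.1 * p.1 + β.2 * p.2) =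
      ((gaussianReal μ v).prod (expMeasure r)).map fun p => β'.1 * p.1 + β'.2 * p.2) :
    β = β' := by
  have hid : IdentDistrib (fun p : ℝ × ℝ => β.1 * p.1 + β.2 * p.2)
      (fun p => β'.1 * p.1 + β'.2 * p.2) ((gaussianReal μ v).prod (expMeasure r))
      ((gaussianReal μ v).prod (expMeasure r)) := ⟨by fun_prop, by fun_prop, h⟩
  have hmean := hid.integral_eq
  rw [integral_linear_gaussianReal_prod_expMeasure hr,
    integral_linear_gaussianReal_prod_expMeasure hr] at hmean
  have hthird :=
    (hid.comp (u := fun y => (y - (β.1 * μ + β.2 / r)) ^ 3) (by fun_prop)).integral_eq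
  simp only [Function.comp_def] at hthird
  rw [integral_linear_sub_mean_pow_three_gaussianReal_prod_expMeasure hr, hmean,
    integral_linear_sub_mean_pow_three_gaussianReal_prod_expMeasure hr] at hthird
  have hb : β.2 = β'.2 := by
    rw [← (Odd.pow_inj (n := 3) (by decide))]
    field_simp at hthird
    linarith
  have ha : β.1 = β'.1 := by
    refine mul_right_cancel₀ hμ ?_
    rw [hb] at hmean
    linarith
  exact Prod.ext ha hb

end Design

/-- **Uniqueness for a Gaussian–exponential design.**  Let
`X = (X¹, X²)` with `X¹ ~ N(μ, 1)`, `μ ≠ 0`, and `X² ~ Exp(1)` independent.  If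
`β¹X¹ + β²X²` and `β̃¹X¹ + β̃²X²` have the same distribution then `β = β̃`; in
particular `B₀ = {β₀}` for every `β₀ ∈ ℝ²`. -/
theorem gaussian_exponential_uniqueness (μ : ℝ) (hμ : μ ≠ 0) :
    (∀ β βt : ℝ × ℝ,
        Measure.map (fun p : ℝ × ℝ => β.1 * p.1 + β.2 * p.2)
            ((gaussianReal μ 1).prod (expMeasure 1))
          = Measure.map (fun p : ℝ × ℝ => βt.1 * p.1 + βt.2 * p.2)
              ((gaussianReal μ 1).prod (expMeasure 1)) →
        β = βt) ∧
      ∀ β₀ : ℝ × ℝ,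
        {β : ℝ × ℝ |
            Measure.map (fun p : ℝ × ℝ => β.1 * p.1 + β.2 * p.2)
                ((gaussianReal μ 1).prod (expMeasure 1))
              = Measure.map (fun p : ℝ × ℝ => β₀.1 * p.1 + β₀.2 * p.2)
                  ((gaussianReal μ 1).prod (expMeasure 1))}
          = {β₀} :=
  ⟨fun _ _ h => eq_of_map_linear_gaussianReal_prod_expMeasure_eq hμ one_pos h,
    fun _ => Set.eq_singleton_iff_unique_mem.mpr
      ⟨rfl, fun _ h => eq_of_map_linear_gaussianReal_prod_expMeasure_eq hμ one_pos h⟩⟩
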